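/- arXiv:2303.17204 — 4 statements merged into one kernel-verified Lean document; each statement's English description precedes it below -/
import Mathlib

section
/- Let V ⊆ ℝ be a finite nonempty set of points with positive weights w : V → ℝ>0. Then the weighted 1-center cost min_{x∈ℝ} max_{v∈V} w(v)·|x − v| is attained, and it equals max_{u,v∈V} ( w(u)·w(v)·|u − v| / (w(u) + w(v)) ). -/
/-- **Weighted 1-center on the line.**  For a finite nonempty set `V ⊆ ℝ` of
points with positive weights `w`, the weighted 1-center cost
`min_{x ∈ ℝ} max_{v ∈ V} w v * |x - v|` is attained, and it equals
`max_{u, v ∈ V} w u * w v * |u - v| / (w u + w v)`. -/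
theorem weighted_one_center_on_line
    (V : Finset ℝ) (hV : V.Nonempty) (w : ℝ → ℝ) (hw : ∀ v ∈ V, 0 < w v) :
    ∃ x : ℝ,
      (∀ y : ℝ,
        V.sup' hV (fun v => w v * |x - v|) ≤ V.sup' hV (fun v => w v * |y - v|)) ∧
      V.sup' hV (fun v => w v * |x - v|) =
        (V ×ˢ V).sup' (hV.product hV)
          (fun p => w p.1 * w p.2 * |p.1 - p.2| / (w p.1 + w p.2)) := by
  set cost : ℝ × ℝ → ℝ := fun p => w p.1 * w p.2 * |p.1 - p.2| / (w p.1 + w p.2)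
    with hcost
  set M : ℝ := (V ×ˢ V).sup' (hV.product hV) cost with hMdef
  -- Lower bound: every candidate value is at most f y for every y.
  have hlow : ∀ y : ℝ, M ≤ V.sup' hV (fun v => w v * |y - v|) := by
    intro y
    apply Finset.sup'_le
    rintro ⟨u, v⟩ hp
    rw [Finset.mem_product] at hp
    obtain ⟨hu, hv⟩ := hp
    have hwu := hw u hu
    have hwv := hw v hv
    have hs : 0 < w u + w v := by linarith
    simp only [hcost]
    rw [div_le_iff₀ hs]
    have h1 : w u * |y - u| ≤ V.sup' hV (fun v => w v * |y - v|) :=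
      Finset.le_sup' (fun v => w v * |y - v|) hu
    have h2 : w v * |y - v| ≤ V.sup' hV (fun v => w v * |y - v|) :=
      Finset.le_sup' (fun v => w v * |y - v|) hv
    have htri : |u - v| ≤ |y - u| + |y - v| := by
      calc |u - v| ≤ |u - y| + |y - v| := abs_sub_le u y v
        _ = |y - u| + |y - v| := by rw [abs_sub_comm u y]
    nlinarith [mul_le_mul_of_nonneg_left h1 hwv.le, mul_le_mul_of_nonneg_left h2 hwu.le,
      mul_le_mul_of_nonneg_left htri (mul_pos hwu hwv).le]
  -- A maximal pair.
  obtain ⟨p, hp, hpmax⟩ := Finset.exists_max_image (V ×ˢ V) cost (hV.product hV)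
  have hMp : cost p = M :=
    le_antisymm (Finset.le_sup' cost hp) (Finset.sup'_le _ _ fun q hq => hpmax q hq)
  rw [Finset.mem_product] at hp
  obtain ⟨a, b, ha, hb, hab, habM⟩ :
      ∃ a b, a ∈ V ∧ b ∈ V ∧ a ≤ b ∧ cost (a, b) = M := by
    rcases le_total p.1 p.2 with h | h
    · exact ⟨p.1, p.2, hp.1, hp.2, h, hMp⟩
    · refine ⟨p.2, p.1, hp.2, hp.1, h, ?_⟩
      rw [← hMp]
      simp only [hcost]
      rw [abs_sub_comm]
      ring_nf
  have hwa := hw a ha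
  have hwb := hw b hb
  have hs : 0 < w a + w b := by linarith
  have hM0 : 0 ≤ M := by
    have h : cost (a, a) ≤ M := Finset.le_sup' cost (Finset.mk_mem_product ha ha)
    have h0 : cost (a, a) = 0 := by simp [hcost]
    linarith
  set x : ℝ := (w a * a + w b * b) / (w a + w b) with hx
  have hxa : w a * (x - a) = M := by
    rw [← habM]
    simp only [hcost, hx]
    rw [abs_of_nonpos (by linarith : a - b ≤ 0)]
    field_simp
    ring
  have hbx : w b * (b - x) = M := by
    rw [← habM]
    simp only [hcost, hx]
    rw [abs_of_nonpos (by linarith : a - b ≤ 0)]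
    field_simp
    ring
  have hax : a ≤ x := by nlinarith
  have hxb : x ≤ b := by nlinarith
  have hkey : ∀ z ∈ V, w z * |x - z| ≤ M := by
    intro z hz
    have hwz := hw z hz
    by_contra hlt
    push_neg at hlt
    rcases le_total z x with hzx | hxz
    · -- z ≤ x : use the pair (z, b)
      have habs : |x - z| = x - z := abs_of_nonneg (by linarith)
      rw [habs] at hlt
      have hle : cost (z, b) ≤ M :=
        Finset.le_sup' cost (Finset.mk_mem_product hz hb)
      simp only [hcost] at hle
      rw [abs_of_nonpos (by linarith : z - b ≤ 0), div_le_iff₀ (by linarith : (0:ℝ) < w z + w b)] at hle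
      nlinarith
    · -- x ≤ z : use the pair (a, z)
      have habs : |x - z| = z - x := by
        rw [abs_sub_comm]; exact abs_of_nonneg (by linarith)
      rw [habs] at hlt
      have hle : cost (a, z) ≤ M :=
        Finset.le_sup' cost (Finset.mk_mem_product ha hz)
      simp only [hcost] at hle
      rw [abs_of_nonpos (by linarith : a - z ≤ 0), div_le_iff₀ (by linarith : (0:ℝ) < w a + w z)] at hle
      nlinarith
  have hfx : V.sup' hV (fun v => w v * |x - v|) = M :=
    le_antisymm (Finset.sup'_le _ _ hkey) (hlow x)
  exact ⟨x, fun y => hfx ▸ hlow y, hfx⟩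
end

section
/- Let V ⊆ ℝ be a finite nonempty set of points with positive weights w : V → ℝ>0, let k ≥ 1, and let λ* = min over k-tuples c : Fin k → ℝ of max_{v∈V} min_i w(v)·|c i − v| be the optimal weighted k-center cost. Then there exist u, v ∈ V (possibly u = v) and a point x ∈ ℝ with u ≤ x ≤ v such that λ* = w(u)·(x − u) = w(v)·(v − x); in particular λ* = w(u)·w(v)·(v − u) / (w(u) + w(v)). (The optimal cost is always one of the finitely many candidate values cost(u,v) determined by pairs of vertices lying on opposite sides of a center.) -/
/-- **The optimal cost is a candidate value (line version of Lemma 12).**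
For a finite nonempty set `V ⊆ ℝ` with positive weights `w`, `k ≥ 1`, and
`λ*` the minimum weighted `k`-center cost, there are vertices `u, v ∈ V`
(possibly equal) and a point `x` with `u ≤ x ≤ v` such that
`λ* = w u * (x - u) = w v * (v - x)`; in particular
`λ* = w u * w v * (v - u) / (w u + w v)`. -/
theorem weighted_kcenter_on_line_optimal_is_candidate
    (V : Finset ℝ) (hV : V.Nonempty) (w : ℝ → ℝ) (hw : ∀ v ∈ V, 0 < w v)
    (k : ℕ) (hk : 1 ≤ k) (lamStar : ℝ)
    (hStar : IsLeast
      {r : ℝ | ∃ c : Fin k → ℝ,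
        V.sup' hV (fun v =>
          Finset.univ.inf' ⟨⟨0, hk⟩, Finset.mem_univ _⟩
            (fun i : Fin k => w v * |c i - v|)) = r} lamStar) :
    ∃ u ∈ V, ∃ v ∈ V, ∃ x : ℝ, u ≤ x ∧ x ≤ v ∧
      lamStar = w u * (x - u) ∧ lamStar = w v * (v - x) ∧
      lamStar = w u * w v * (v - u) / (w u + w v) := by
  classical
  have huniv : (Finset.univ : Finset (Fin k)).Nonempty := ⟨⟨0, hk⟩, Finset.mem_univ _⟩
  set g : (Fin k → ℝ) → ℝ → ℝ := fun c v =>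
    Finset.univ.inf' huniv (fun i : Fin k => w v * |c i - v|) with hgdef
  obtain ⟨c, hc⟩ := hStar.1
  have hc : V.sup' hV (g c) = lamStar := hc
  have hlb : ∀ c' : Fin k → ℝ, lamStar ≤ V.sup' hV (g c') := fun c' =>
    hStar.2 ⟨c', rfl⟩
  obtain ⟨v0, hv0⟩ := id hV
  have h0 : 0 ≤ lamStar := by
    have h1 : (0 : ℝ) ≤ g c v0 :=
      Finset.le_inf' huniv _ fun i _ => mul_nonneg (hw v0 hv0).le (abs_nonneg _)
    have h2 : g c v0 ≤ V.sup' hV (g c) := Finset.le_sup' (g c) hv0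
    linarith [hc ▸ h2]
  rcases eq_or_lt_of_le h0 with h0 | hpos
  · -- λ* = 0 : the degenerate triple (v0, v0, v0) works.
    refine ⟨v0, hv0, v0, hv0, v0, le_refl _, le_refl _, ?_, ?_, ?_⟩ <;>
      simp [← h0]
  · -- λ* > 0
    have hle : ∀ v ∈ V, g c v ≤ lamStar := fun v hv => hc ▸ Finset.le_sup' (g c) hv
    set Lft : Fin k → Prop := fun i => ∃ u ∈ V, u ≤ c i ∧ w u * |c i - u| = lamStar
      with hLdef
    set Rgt : Fin k → Prop := fun i => ∃ v ∈ V, c i ≤ v ∧ w v * |c i - v| = lamStar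
      with hRdef
    by_cases hcl : ∃ i, Lft i ∧ Rgt i
    · obtain ⟨i, ⟨u, hu, hule, huL⟩, ⟨v, hv, hvle, hvL⟩⟩ := hcl
      have hau : |c i - u| = c i - u := abs_of_nonneg (by linarith)
      have hav : |c i - v| = -(c i - v) := abs_of_nonpos (by linarith)
      have e1 : lamStar = w u * (c i - u) := by rw [← huL, hau]
      have e2 : lamStar = w v * (v - c i) := by rw [← hvL, hav]; ring
      have hwu := hw u hu
      have hwv := hw v hv
      have hsum : (0:ℝ) < w u + w v := by linarith
      refine ⟨u, hu, v, hv, c i, hule, hvle, e1, e2, ?_⟩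
      rw [eq_div_iff hsum.ne']
      linear_combination (w u + w v) * e1 + w u * e2 - w u * e1
    · -- no center is tight on both sides: perturb to contradict optimality
      set d : Fin k → ℝ := fun i => if Lft i then -1 else 1 with hddef
      have hd1 : ∀ i, |d i| = 1 := by
        intro i
        simp only [hddef]
        split <;> simp
      set ε : ℝ := V.inf' hV (fun v =>
        if g c v = lamStar then lamStar / w v else (lamStar - g c v) / (2 * w v))
        with hεdef
      have hεpos : 0 < ε := by
        rw [hεdef, Finset.lt_inf'_iff]
        intro v hv
        split_ifs with ht
        · exact div_pos hpos (hw v hv)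
        · have : g c v < lamStar := lt_of_le_of_ne (hle v hv) ht
          have h2 : 0 < lamStar - g c v := by linarith
          have h3 : (0:ℝ) < 2 * w v := by have := hw v hv; linarith
          exact div_pos h2 h3
      set c' : Fin k → ℝ := fun i => c i + ε * d i with hc'def
      have key : ∀ v ∈ V, g c' v < lamStar := by
        intro v hv
        have hwvpos := hw v hv
        obtain ⟨i, _, hi⟩ := Finset.exists_mem_eq_inf' huniv
          (fun i : Fin k => w v * |c i - v|)
        by_cases ht : g c v = lamStar
        · -- tight vertex
          have hεle : ε ≤ lamStar / w v := by
            have h1 : ε ≤ (if g c v = lamStar then lamStar / w v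
                else (lamStar - g c v) / (2 * w v)) := Finset.inf'_le _ hv
            rwa [if_pos ht] at h1
          have hiv : w v * |c i - v| = lamStar := by rw [← hi]; exact ht
          have habs : |c i - v| = lamStar / w v := by
            field_simp at hiv ⊢
            linarith [hiv]
          have habs_pos : 0 < |c i - v| := by
            rw [habs]; exact div_pos hpos hwvpos
          have hεabs : ε ≤ |c i - v| := habs ▸ hεle
          have hne : c i ≠ v := by
            intro h; rw [h] at habs_pos; simp at habs_pos
          have hstep : |c' i - v| = |c i - v| - ε := by
            rcases lt_or_gt_of_ne hne with hlt | hgt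
            · -- c i < v : Rgt i holds hence ¬ Lft i, d i = 1
              have hR : Rgt i := ⟨v, hv, hlt.le, hiv⟩
              have hnL : ¬ Lft i := fun hL => hcl ⟨i, hL, hR⟩
              have hdi : d i = 1 := by simp only [hddef]; rw [if_neg hnL]
              have hci : c' i = c i + ε := by simp [hc'def, hdi]
              have ha1 : |c i - v| = v - c i := by
                rw [abs_of_nonpos (by linarith)]; ring
              rw [hci, ha1, abs_of_nonpos (by linarith)]
              ring
            · -- v < c i : Lft i holds, d i = -1
              have hL : Lft i := ⟨v, hv, hgt.le, hiv⟩
              have hdi : d i = -1 := by simp only [hddef]; rw [if_pos hL]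
              have hci : c' i = c i - ε := by simp [hc'def, hdi]; ring
              have ha1 : |c i - v| = c i - v := abs_of_nonneg (by linarith)
              rw [hci, ha1, abs_of_nonneg (by rw [ha1] at hεabs; linarith)]
              ring
          have hgle : g c' v ≤ w v * |c' i - v| :=
            Finset.inf'_le _ (Finset.mem_univ i)
          have : w v * |c' i - v| = lamStar - w v * ε := by
            rw [hstep, mul_sub, hiv]
          nlinarith
        · -- non-tight vertex
          have hlt : g c v < lamStar := lt_of_le_of_ne (hle v hv) ht
          have hεle : ε ≤ (lamStar - g c v) / (2 * w v) := by
            have h1 : ε ≤ (if g c v = lamStar then lamStar / w v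
                else (lamStar - g c v) / (2 * w v)) := Finset.inf'_le _ hv
            rwa [if_neg ht] at h1
          have htri : |c' i - v| ≤ |c i - v| + ε := by
            have : c' i - v = (c i - v) + ε * d i := by simp [hc'def]; ring
            rw [this]
            calc |(c i - v) + ε * d i| ≤ |c i - v| + |ε * d i| := abs_add_le _ _
              _ = |c i - v| + ε := by rw [abs_mul, hd1 i, mul_one, abs_of_pos hεpos]
          have hgle : g c' v ≤ w v * |c' i - v| :=
            Finset.inf'_le _ (Finset.mem_univ i)
          have h2 : w v * |c' i - v| ≤ w v * |c i - v| + w v * ε := by nlinarith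
          have h3 : w v * ε ≤ (lamStar - g c v) / 2 := by
            have := mul_le_mul_of_nonneg_left hεle hwvpos.le
            calc w v * ε ≤ w v * ((lamStar - g c v) / (2 * w v)) := this
              _ = (lamStar - g c v) / 2 := by field_simp
          have h4 : w v * |c i - v| = g c v := hi.symm
          linarith
      have : V.sup' hV (g c') < lamStar := by
        rw [Finset.sup'_lt_iff]
        intro v hv
        exact key v hv
      exact absurd (hlb c') (by linarith)
end

section
/- Let (X,d) be a metric space, let u, v, h, y ∈ X, let w_u, w_v > 0 be positive reals and λ ≥ 0. Suppose d(y,u) = d(y,h) + d(h,u) and d(y,v) = d(y,h) + d(h,v) (every shortest route from y to u and to v passes through h), and suppose λ/w_u − d(h,u) ≤ λ/w_v − d(h,v) (u has rank at most that of v). Then w_u·d(y,u) ≤ λ implies w_v·d(y,v) ≤ λ; that is, the part of the λ-cover of u lying beyond h is contained in the part of the λ-cover of v lying beyond h. -/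
/-- **Monotonicity of λ-covers beyond a hinge (Observation 2).**  In a metric
space, if every shortest route from `y` to `u` and to `v` passes through the
hinge `h` (i.e. `dist y u = dist y h + dist h u` and
`dist y v = dist y h + dist h v`), and `u` has rank at most that of `v`
(`λ/wᵤ - dist h u ≤ λ/wᵥ - dist h v`), then `y` belonging to the `λ`-cover of
`u` implies `y` belongs to the `λ`-cover of `v`. -/
theorem lambda_cover_rank_mono {X : Type*} [MetricSpace X]
    (u v h y : X) (wu wv : ℝ) (hwu : 0 < wu) (hwv : 0 < wv)
    (lam : ℝ) (hlam : 0 ≤ lam)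
    (hu : dist y u = dist y h + dist h u)
    (hv : dist y v = dist y h + dist h v)
    (hrank : lam / wu - dist h u ≤ lam / wv - dist h v) :
    wu * dist y u ≤ lam → wv * dist y v ≤ lam := by
  intro hcov
  rw [hu] at hcov
  rw [hv]
  have h1 : dist y h + dist h u ≤ lam / wu := by
    rw [le_div_iff₀ hwu]; linarith [mul_comm wu (dist y h + dist h u)]
  have h2 : dist y h + dist h v ≤ lam / wv := by linarith
  calc wv * (dist y h + dist h v) ≤ wv * (lam / wv) := by
        exact mul_le_mul_of_nonneg_left h2 hwv.le
    _ = lam := by field_simp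
end

section
/- Let G be a simple graph that is a cactus, in the sense that any two cycles of G either have equal edge sets or have disjoint edge sets (no two distinct cycles share an edge). Then any two cycles of G with disjoint edge sets share at most one common vertex; that is, if c₁ and c₂ are cycles of G whose edge sets are disjoint, then the intersection of their vertex supports has cardinality at most 1. -/
/-!
If two edge-disjoint cycles `c₁`, `c₂` met in vertices `u ≠ v`, then `u` and `v` would be joined
by a path inside `c₁` and by a different path inside `c₂`. Two distinct paths with the same ends
contain a cycle that uses edges of both. That cycle shares an edge with `c₂`, so by the cactus
property it has the same edges as `c₂`; but it also uses an edge of `c₁`.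
-/

namespace SimpleGraph.Walk

variable {V : Type*} {G : SimpleGraph V} {u v : V}

theorem exists_isPath_edges_subset [DecidableEq V] {a b : V} (c : G.Walk a b)
    (hu : u ∈ c.support) (hv : v ∈ c.support) :
    ∃ p : G.Walk u v, p.IsPath ∧ p.edges ⊆ c.edges := by
  let w := (c.takeUntil u hu).reverse.append (c.takeUntil v hv)
  refine ⟨w.bypass, w.bypass_isPath, List.Subset.trans w.edges_bypass_subset_edges ?_⟩
  simp only [w, edges_append, edges_reverse, List.append_subset, List.reverse_subset]
  exact ⟨c.edges_takeUntil_subset_edges hu, c.edges_takeUntil_subset_edges hv⟩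

theorem not_nil_of_isCycle_append_reverse {p q : G.Walk u v} (hq : q.IsPath)
    (hc : (p.append q.reverse).IsCycle) : ¬p.Nil := by
  intro hp
  obtain rfl := hp.eq
  rw [hp.eq_nil, (isPath_iff_nil.mp hq).eq_nil] at hc
  exact not_isCycle_nil hc

theorem IsPath.exists_isCycle_meeting_edges_of_ne {p q : G.Walk u v}
    (hp : p.IsPath) (hq : q.IsPath) (h : p ≠ q) :
    ∃ (w : V) (c : G.Walk w w), c.IsCycle ∧
      (∃ e ∈ c.edges, e ∈ p.edges) ∧ ∃ e ∈ c.edges, e ∈ q.edges := by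
  obtain ⟨u', v', p', q', hp', hq', hc⟩ := hp.exists_isCycle_of_ne hq h
  have hc' : (q'.append p'.reverse).IsCycle := by simpa [reverse_append] using hc.reverse
  obtain ⟨e, he⟩ := List.exists_mem_of_ne_nil _ <| edges_eq_nil.not.mpr <|
    not_nil_of_isCycle_append_reverse (isPath_of_isSubwalk hq' hq) hc
  obtain ⟨f, hf⟩ := List.exists_mem_of_ne_nil _ <| edges_eq_nil.not.mpr <|
    not_nil_of_isCycle_append_reverse (isPath_of_isSubwalk hp' hp) hc'
  exact ⟨u', _, hc, ⟨e, by simp [he], hp'.edges_subset he⟩,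
    ⟨f, by simp [hf], hq'.edges_subset hf⟩⟩

end SimpleGraph.Walk

open SimpleGraph Walk

theorem cactus_cycles_share_at_most_one_vertex_general
    {V : Type*} [DecidableEq V] (G : SimpleGraph V)
    (hcactus : ∀ {a b : V} (c₁ : G.Walk a a) (c₂ : G.Walk b b),
      c₁.IsCycle → c₂.IsCycle →
        c₁.edges.toFinset = c₂.edges.toFinset ∨
          Disjoint c₁.edges.toFinset c₂.edges.toFinset)
    {a b : V} (c₁ : G.Walk a a) (c₂ : G.Walk b b)
    (h₂ : c₂.IsCycle)
    (hdisj : Disjoint c₁.edges.toFinset c₂.edges.toFinset) :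
    (c₁.support.toFinset ∩ c₂.support.toFinset).card ≤ 1 := by
  by_contra! hcard
  obtain ⟨u, hu, v, hv, huv⟩ := Finset.one_lt_card.mp hcard
  simp only [Finset.mem_inter, List.mem_toFinset] at hu hv
  rw [List.disjoint_toFinset_iff_disjoint] at hdisj
  obtain ⟨p, hp, hp₁⟩ := c₁.exists_isPath_edges_subset hu.1 hv.1
  obtain ⟨q, hq, hq₂⟩ := c₂.exists_isPath_edges_subset hu.2 hv.2
  have hpq : p ≠ q := by
    rintro rfl
    obtain ⟨e, he⟩ := List.exists_mem_of_ne_nil _ (edges_eq_nil.not.mpr (not_nil_of_ne huv))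
    exact hdisj (hp₁ he) (hq₂ he)
  obtain ⟨_, c, hc, ⟨e, hec, hep⟩, ⟨f, hfc, hfq⟩⟩ :=
    hp.exists_isCycle_meeting_edges_of_ne hq hpq
  rcases hcactus c c₂ hc h₂ with heq | hdisj₂
  · have he₂ : e ∈ c₂.edges := by rw [← List.mem_toFinset, ← heq, List.mem_toFinset]; exact hec
    exact hdisj (hp₁ hep) he₂
  · rw [List.disjoint_toFinset_iff_disjoint] at hdisj₂
    exact hdisj₂ hfc (hq₂ hfq)

/-- **Edge-disjoint cycles of a cactus meet in at most one vertex.**  Let `G`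
be a simple graph that is a cactus: any two cycles of `G` have equal edge sets
or disjoint edge sets.  Then any two cycles of `G` with disjoint edge sets
share at most one vertex. -/
theorem cactus_cycles_share_at_most_one_vertex
    {V : Type*} [DecidableEq V] (G : SimpleGraph V)
    (hcactus : ∀ {a b : V} (c₁ : G.Walk a a) (c₂ : G.Walk b b),
      c₁.IsCycle → c₂.IsCycle →
        c₁.edges.toFinset = c₂.edges.toFinset ∨
          Disjoint c₁.edges.toFinset c₂.edges.toFinset)
    {a b : V} (c₁ : G.Walk a a) (c₂ : G.Walk b b)
    (h₁ : c₁.IsCycle) (h₂ : c₂.IsCycle)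
    (hdisj : Disjoint c₁.edges.toFinset c₂.edges.toFinset) :
    (c₁.support.toFinset ∩ c₂.support.toFinset).card ≤ 1 :=
  cactus_cycles_share_at_most_one_vertex_general G hcactus c₁ c₂ h₂ hdisj
end
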